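/- arXiv:1703.01323 — 5 statements merged into one kernel-verified Lean document; each statement's English description precedes it below -/
import Mathlib

section
/- Let N be a positive integer, let n : Fin N → ℤ, let M_inf : Matrix (Fin N) (Fin N) ℝ, and let M : ℝ → Matrix (Fin N) (Fin N) ℝ satisfy: for every column index j and every row index i, the function c ↦ M c i j − c^(n j) * (M_inf i j) is O(c^(n j − 1)) as c → ∞. If M_inf is invertible (equivalently det M_inf ≠ 0), then there exists c₀ ∈ ℝ such that for all c ≥ c₀ the matrix M c is invertible. -/
open Filter Asymptotics Topology

/-! Dividing column `j` of `M c` by `c ^ n j` yields matrices converging to `M_inf`. Since the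
determinant is continuous, those are eventually invertible, and for `c ≠ 0` the column scaling is
an invertible diagonal factor, so `M c` is invertible as well. -/

theorem Matrix.eventually_isUnit_of_tendsto {α ι K : Type*} [Fintype ι] [DecidableEq ι]
    [Field K] [TopologicalSpace K] [IsTopologicalRing K] [T1Space K]
    {l : Filter α} {A : α → Matrix ι ι K} {B : Matrix ι ι K}
    (hA : Tendsto A l (𝓝 B)) (hB : IsUnit B) : ∀ᶠ x in l, IsUnit (A x) := by
  have hdet : Tendsto (fun x => (A x).det) l (𝓝 B.det) :=
    ((continuous_id.matrix_det).tendsto B).comp hA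
  filter_upwards [hdet.eventually_ne ((Matrix.isUnit_iff_isUnit_det B).1 hB).ne_zero]
    with x hx
  exact (Matrix.isUnit_iff_isUnit_det _).2 hx.isUnit

theorem tendsto_mul_zpow_neg_of_isBigO {f : ℝ → ℝ} {k : ℤ} {a : ℝ}
    (hf : (fun c => f c - c ^ k * a) =O[atTop] fun c => c ^ (k - 1)) :
    Tendsto (fun c => f c * c ^ (-k)) atTop (𝓝 a) := by
  have hrem : (fun c => (f c - c ^ k * a) * c ^ (-k)) =O[atTop] fun c => c ^ (-1 : ℤ) := by
    refine (hf.mul (isBigO_refl (fun c : ℝ => c ^ (-k)) atTop)).trans_eventuallyEq ?_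
    filter_upwards [eventually_ne_atTop (0 : ℝ)] with c hc
    rw [← zpow_add₀ hc]
    ring_nf
  have hlim := (hrem.trans_tendsto (tendsto_zpow_atTop_zero (by norm_num))).add_const a
  rw [zero_add] at hlim
  refine hlim.congr' ?_
  filter_upwards [eventually_ne_atTop (0 : ℝ)] with c hc
  rw [sub_mul, mul_right_comm, ← zpow_add₀ hc, add_neg_cancel, zpow_zero, one_mul, sub_add_cancel]

theorem eventually_invertible_general
    (N : ℕ) (n : Fin N → ℤ)
    (M_inf : Matrix (Fin N) (Fin N) ℝ)
    (M : ℝ → Matrix (Fin N) (Fin N) ℝ)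
    (h : ∀ j i : Fin N,
      (fun c : ℝ => M c i j - c ^ (n j) * M_inf i j)
        =O[atTop] fun c : ℝ => c ^ (n j - 1))
    (hinv : IsUnit M_inf) :
    ∃ c₀ : ℝ, ∀ c ≥ c₀, IsUnit (M c) := by
  set D : ℝ → Matrix (Fin N) (Fin N) ℝ := fun c => Matrix.diagonal fun j => c ^ (-n j)
  have hlim : Tendsto (fun c => M c * D c) atTop (𝓝 M_inf) :=
    tendsto_pi_nhds.2 fun i => tendsto_pi_nhds.2 fun j => by
      simpa only [D, Matrix.mul_diagonal] using tendsto_mul_zpow_neg_of_isBigO (h j i)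
  have hD : ∀ c ≠ 0, IsUnit (D c) := fun c hc =>
    Matrix.isUnit_diagonal.2 <| Pi.isUnit_iff.2 fun j => (zpow_ne_zero _ hc).isUnit
  obtain ⟨c₀, hc₀⟩ := eventually_atTop.1
    ((Matrix.eventually_isUnit_of_tendsto hlim hinv).and (eventually_ne_atTop 0))
  exact ⟨c₀, fun c hc => (IsUnit.mul_right_iff (hD c (hc₀ c hc).2)).1 (hc₀ c hc).1⟩

/-- If each column `j` of the matrix family `M c` satisfies
`M c i j = c ^ (n j) * M_inf i j + O(c ^ (n j - 1))` as `c → ∞` and `M_inf` is invertible,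
then `M c` is invertible for all sufficiently large `c`. -/
theorem eventually_invertible
    (N : ℕ) (hN : 0 < N) (n : Fin N → ℤ)
    (M_inf : Matrix (Fin N) (Fin N) ℝ)
    (M : ℝ → Matrix (Fin N) (Fin N) ℝ)
    (h : ∀ j i : Fin N,
      (fun c : ℝ => M c i j - c ^ (n j) * M_inf i j)
        =O[atTop] fun c : ℝ => c ^ (n j - 1))
    (hinv : IsUnit M_inf) :
    ∃ c₀ : ℝ, ∀ c ≥ c₀, IsUnit (M c) :=
  eventually_invertible_general N n M_inf M h hinv
end

section
/- Let N be a positive integer, let n : Fin N → ℤ, m ∈ ℤ, let M_inf : Matrix (Fin N) (Fin N) ℝ be invertible, and let M : ℝ → Matrix (Fin N) (Fin N) ℝ satisfy: for every column index j and every row index i, the function c ↦ M c i j − c^(n j) * (M_inf i j) is O(c^(n j − 1)) as c → ∞. Let b_inf : Fin N → ℝ and b : ℝ → (Fin N → ℝ) satisfy, for each index i, that c ↦ b c i − c^m * (b_inf i) is O(c^(m − 1)) as c → ∞. Let x_inf := M_inf⁻¹ • b_inf, and for those c with M c invertible let x c := (M c)⁻¹ • (b c). Then for each index j, the function c ↦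 x c j − c^(m − n j) * (x_inf j) is O(c^(m − n j − 1)) as c → ∞ (this is well defined since M c is invertible for all sufficiently large c). -/
/-!
Rescaling column `j` of `M c` by `c ^ (-n j)` gives `G c = M_inf + O(1/c)`. Continuity of the
inverse keeps `(G c)⁻¹` bounded, so the identity `G⁻¹ - A⁻¹ = G⁻¹ (A - G) A⁻¹` gives
`(G c)⁻¹ = M_inf⁻¹ + O(1/c)` and hence `(G c)⁻¹ b c = c ^ m x_inf + O(c ^ (m - 1))`. Since
`(M c)⁻¹ = diag (c ^ (-n)) (G c)⁻¹`, the `j`-th coordinate of the solution is `c ^ (-n j)` times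
this.
-/

open Filter Asymptotics Matrix Topology

theorem isBigO_zpow_zpow_atTop {k l : ℤ} (h : k ≤ l) :
    (fun c : ℝ => c ^ k) =O[atTop] fun c => c ^ l := by
  refine IsBigO.of_bound 1 ?_
  filter_upwards [eventually_ge_atTop (1 : ℝ)] with c hc
  have hc0 : 0 < c := one_pos.trans_le hc
  rw [Real.norm_of_nonneg (zpow_pos hc0 k).le, Real.norm_of_nonneg (zpow_pos hc0 l).le, one_mul]
  exact zpow_le_zpow_right₀ hc h

theorem zpow_mul_zpow_eventuallyEq_atTop (k l : ℤ) :
    (fun c : ℝ => c ^ k * c ^ l) =ᶠ[atTop] fun c => c ^ (k + l) := by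
  filter_upwards [eventually_ne_atTop (0 : ℝ)] with c hc
  rw [zpow_add₀ hc]

theorem Asymptotics.IsBigO.mul_zpow_atTop {f g : ℝ → ℝ} {k l : ℤ}
    (hf : f =O[atTop] fun c => c ^ k) (hg : g =O[atTop] fun c => c ^ l) :
    (fun c => f c * g c) =O[atTop] fun c => c ^ (k + l) :=
  (hf.mul hg).congr' EventuallyEq.rfl (zpow_mul_zpow_eventuallyEq_atTop k l)

namespace Matrix

variable {α 𝕜 m n p : Type*} [NormedField 𝕜] {l : Filter α}

theorem inv_diagonal_of_ne_zero [Fintype n] [DecidableEq n] {d : n → 𝕜} (hd : ∀ k, d k ≠ 0) :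
    (diagonal d)⁻¹ = diagonal fun k => (d k)⁻¹ := by
  refine inv_eq_left_inv ?_
  rw [diagonal_mul_diagonal, ← diagonal_one]
  exact congrArg diagonal (funext fun k => inv_mul_cancel₀ (hd k))

theorem isBigO_mul_apply [Fintype n] {P : α → Matrix m n 𝕜} {Q : α → Matrix n p 𝕜}
    {f g : α → ℝ} (hP : ∀ i k, (fun x => P x i k) =O[l] f)
    (hQ : ∀ k j, (fun x => Q x k j) =O[l] g) (i : m) (j : p) :
    (fun x => (P x * Q x) i j) =O[l] fun x => f x * g x := by
  simp only [mul_apply]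
  exact IsBigO.fun_sum fun k _ => (hP i k).mul (hQ k j)

theorem isBigO_mulVec_apply [Fintype n] {P : α → Matrix m n 𝕜} {v : α → n → 𝕜}
    {f g : α → ℝ} (hP : ∀ i k, (fun x => P x i k) =O[l] f)
    (hv : ∀ k, (fun x => v x k) =O[l] g) (i : m) :
    (fun x => (P x *ᵥ v x) i) =O[l] fun x => f x * g x := by
  simp only [mulVec, dotProduct]
  exact IsBigO.fun_sum fun k _ => (hP i k).mul (hv k)

theorem tendsto_of_isBigO_sub {G : α → Matrix m n 𝕜} {A : Matrix m n 𝕜} {g : α → ℝ}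
    (hG : ∀ i j, (fun x => G x i j - A i j) =O[l] g) (hg : Tendsto g l (𝓝 0)) :
    Tendsto G l (𝓝 A) :=
  tendsto_pi_nhds.2 fun i => tendsto_pi_nhds.2 fun j =>
    tendsto_sub_nhds_zero_iff.1 ((hG i j).trans_tendsto hg)

theorem isBigO_inv_sub_inv [Fintype n] [DecidableEq n] {G : α → Matrix n n 𝕜}
    {A : Matrix n n 𝕜} {g : α → ℝ} (hA : IsUnit A)
    (hG : ∀ i j, (fun x => G x i j - A i j) =O[l] g) (hg : Tendsto g l (𝓝 0)) (i j : n) :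
    (fun x => (G x)⁻¹ i j - A⁻¹ i j) =O[l] g := by
  have hdetA : A.det ≠ 0 := ((isUnit_iff_isUnit_det A).1 hA).ne_zero
  have hlim : Tendsto G l (𝓝 A) := tendsto_of_isBigO_sub hG hg
  have hdet : ∀ᶠ x in l, (G x).det ≠ 0 :=
    ((continuous_id.matrix_det.tendsto A).comp hlim).eventually_ne hdetA
  have hinv_lim : Tendsto (fun x => (G x)⁻¹) l (𝓝 A⁻¹) := by
    refine (continuousAt_matrix_inv A ?_).tendsto.comp hlim
    rw [Ring.inverse_eq_inv']
    exact continuousAt_inv₀ hdetA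
  have hGinv : ∀ i j, (fun x => (G x)⁻¹ i j) =O[l] fun _ => (1 : ℝ) := fun i j =>
    ((continuous_apply_apply i j).tendsto _ |>.comp hinv_lim).isBigO_one ℝ
  have hAinv : ∀ i j, (fun _ : α => A⁻¹ i j) =O[l] fun _ => (1 : ℝ) := fun i j =>
    isBigO_const_one ℝ _ l
  have hAG : ∀ i j, (fun x => (A - G x) i j) =O[l] g := fun i j => by
    simpa only [sub_apply, neg_sub] using (hG i j).neg_left
  have hdiff := isBigO_mul_apply (fun i j => isBigO_mul_apply hGinv hAG i j) hAinv i j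
  refine hdiff.congr' ?_ (by simp only [one_mul, mul_one, EventuallyEq.rfl])
  filter_upwards [hdet] with x hx
  rw [Matrix.mul_sub, Matrix.sub_mul, nonsing_inv_mul _ (isUnit_iff_ne_zero.2 hx), Matrix.one_mul,
    Matrix.mul_assoc, mul_nonsing_inv _ ((isUnit_iff_isUnit_det A).1 hA), Matrix.mul_one,
    sub_apply]

end Matrix

theorem isBigO_mul_diagonal_inv_zpow_sub {ι κ : Type*} [Fintype κ] [DecidableEq κ]
    {n : κ → ℤ} {A : Matrix ι κ ℝ} {M : ℝ → Matrix ι κ ℝ}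
    (hM : ∀ j i, (fun c : ℝ => M c i j - c ^ (n j) * A i j) =O[atTop] fun c => c ^ (n j - 1))
    (i : ι) (j : κ) :
    (fun c : ℝ => (M c * diagonal fun k => (c ^ n k)⁻¹) i j - A i j)
      =O[atTop] fun c => c ^ (-1 : ℤ) := by
  have h := (hM j i).mul_zpow_atTop (isBigO_refl (fun c : ℝ => c ^ (-n j)) atTop)
  refine h.congr' ?_ (.of_forall fun c => by ring_nf)
  filter_upwards [eventually_ne_atTop (0 : ℝ)] with c hc
  rw [mul_diagonal, sub_mul, mul_right_comm, _root_.zpow_neg,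
    mul_inv_cancel₀ (zpow_ne_zero _ hc), one_mul]

/-- The case `n = 0` of the theorem. -/
theorem isBigO_inv_mulVec_sub {ι : Type*} [Fintype ι] [DecidableEq ι] {m : ℤ}
    {A : Matrix ι ι ℝ} {G : ℝ → Matrix ι ι ℝ} {v : ι → ℝ} {w : ℝ → ι → ℝ} (hA : IsUnit A)
    (hG : ∀ i j, (fun c : ℝ => G c i j - A i j) =O[atTop] fun c => c ^ (-1 : ℤ))
    (hw : ∀ i, (fun c : ℝ => w c i - c ^ m * v i) =O[atTop] fun c => c ^ (m - 1)) (j : ι) :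
    (fun c : ℝ => ((G c)⁻¹ *ᵥ w c) j - c ^ m * (A⁻¹ *ᵥ v) j)
      =O[atTop] fun c => c ^ (m - 1) := by
  have hGinv := isBigO_inv_sub_inv hA hG (tendsto_zpow_atTop_zero (by norm_num))
  have hwO : ∀ i, (fun c : ℝ => w c i) =O[atTop] fun c => c ^ m := fun i => by
    have hv : (fun c : ℝ => c ^ m * v i) =O[atTop] fun c => c ^ m :=
      (isBigO_refl _ _).mul (isBigO_const_one ℝ (v i) atTop) |>.congr_right fun _ => mul_one _
    simpa using ((hw i).trans (isBigO_zpow_zpow_atTop (by omega))).add hv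
  have h₁ : (fun c => (((G c)⁻¹ - A⁻¹) *ᵥ w c) j) =O[atTop] fun c => c ^ (m - 1) := by
    refine (isBigO_mulVec_apply (f := fun c => c ^ (-1 : ℤ)) (fun i k => ?_) hwO j).congr'
      EventuallyEq.rfl ?_
    · simpa only [Matrix.sub_apply] using hGinv i k
    · simpa only [neg_add_eq_sub] using zpow_mul_zpow_eventuallyEq_atTop (-1) m
  have h₂ : (fun c => (A⁻¹ *ᵥ (w c - c ^ m • v)) j) =O[atTop] fun c => c ^ (m - 1) := by
    refine (isBigO_mulVec_apply (fun i k => isBigO_const_one ℝ (A⁻¹ i k) atTop)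
      (g := fun c => c ^ (m - 1)) (fun i => ?_) j).congr_right fun _ => one_mul _
    simpa only [Pi.sub_apply, Pi.smul_apply, smul_eq_mul] using hw i
  refine (h₁.add h₂).congr (fun c => ?_) fun _ => rfl
  simp only [sub_mulVec, mulVec_sub, mulVec_smul, Pi.sub_apply, Pi.smul_apply, smul_eq_mul]
  ring

theorem solution_asymptotic_general
    (N : ℕ) (n : Fin N → ℤ) (m : ℤ)
    (M_inf : Matrix (Fin N) (Fin N) ℝ)
    (M : ℝ → Matrix (Fin N) (Fin N) ℝ)
    (hM : ∀ j i : Fin N,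
      (fun c : ℝ => M c i j - c ^ (n j) * M_inf i j)
        =O[atTop] fun c : ℝ => c ^ (n j - 1))
    (hinv : IsUnit M_inf)
    (b_inf : Fin N → ℝ) (b : ℝ → Fin N → ℝ)
    (hb : ∀ i : Fin N,
      (fun c : ℝ => b c i - c ^ m * b_inf i) =O[atTop] fun c : ℝ => c ^ (m - 1)) :
    ∀ j : Fin N,
      (fun c : ℝ => ((M c)⁻¹ *ᵥ b c) j - c ^ (m - n j) * (M_inf⁻¹ *ᵥ b_inf) j)
        =O[atTop] fun c : ℝ => c ^ (m - n j - 1) := by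
  intro j
  set G : ℝ → Matrix (Fin N) (Fin N) ℝ := fun c => M c * diagonal fun k => (c ^ n k)⁻¹
  have hy := isBigO_inv_mulVec_sub hinv (isBigO_mul_diagonal_inv_zpow_sub hM) hb j
  have hx : ∀ᶠ c in atTop, ((M c)⁻¹ *ᵥ b c) j = c ^ (-n j) * ((G c)⁻¹ *ᵥ b c) j := by
    filter_upwards [eventually_ne_atTop 0] with c hc
    have hMG : M c = G c * diagonal fun k => c ^ n k := by
      simp only [G, Matrix.mul_assoc, diagonal_mul_diagonal,
        inv_mul_cancel₀ (zpow_ne_zero _ hc), diagonal_one, Matrix.mul_one]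
    rw [hMG, Matrix.mul_inv_rev, inv_diagonal_of_ne_zero fun k => zpow_ne_zero _ hc,
      ← mulVec_mulVec, mulVec_diagonal, _root_.zpow_neg]
  refine ((isBigO_refl (fun c : ℝ => c ^ (-n j)) atTop).mul_zpow_atTop hy).congr' ?_
    (.of_forall fun c => by ring_nf)
  filter_upwards [hx, eventually_ne_atTop 0] with c hxc hc
  rw [hxc, mul_sub, ← mul_assoc, ← zpow_add₀ hc, neg_add_eq_sub]

/-- Asymptotics of solutions of the linear systems `M c • x c = b c`: if
`M c i j = c ^ (n j) * M_inf i j + O(c ^ (n j - 1))` columnwise, `M_inf` is invertible and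
`b c i = c ^ m * b_inf i + O(c ^ (m - 1))`, then for each `j` the solution satisfies
`x c j = c ^ (m - n j) * x_inf j + O(c ^ (m - n j - 1))` as `c → ∞`,
where `x_inf = M_inf⁻¹ • b_inf` and `x c = (M c)⁻¹ • b c`. -/
theorem solution_asymptotic
    (N : ℕ) (hN : 0 < N) (n : Fin N → ℤ) (m : ℤ)
    (M_inf : Matrix (Fin N) (Fin N) ℝ)
    (M : ℝ → Matrix (Fin N) (Fin N) ℝ)
    (hM : ∀ j i : Fin N,
      (fun c : ℝ => M c i j - c ^ (n j) * M_inf i j)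
        =O[atTop] fun c : ℝ => c ^ (n j - 1))
    (hinv : IsUnit M_inf)
    (b_inf : Fin N → ℝ) (b : ℝ → Fin N → ℝ)
    (hb : ∀ i : Fin N,
      (fun c : ℝ => b c i - c ^ m * b_inf i) =O[atTop] fun c : ℝ => c ^ (m - 1)) :
    ∀ j : Fin N,
      (fun c : ℝ => ((M c)⁻¹ *ᵥ b c) j - c ^ (m - n j) * (M_inf⁻¹ *ᵥ b_inf) j)
        =O[atTop] fun c : ℝ => c ^ (m - n j - 1) :=
  solution_asymptotic_general N n m M_inf M hM hinv b_inf b hb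
end

section
/- Let n ≥ 2 be a natural number, m := 2n, λ > 0 a real number, and p ∈ ℝ. Then there exist c₀ ∈ ℝ and K > 0 such that for every c ≥ c₀ and every triple (A, B, f) with A, B ∈ ℝ and f : ℝ → ℝ twice continuously differentiable on an open interval containing [λ, 1+λ] satisfying x²·f''(x) − m·x·f'(x) + m·f(x) = −A·(p·(x−λ)+c)^(n−1) + B·x²·(p·(x−λ)+c)^(n−2) for all x ∈ [λ, 1+λ], together with the boundary conditions f(λ) = 0, f(1+λ) = 0, f'(λ) = 2·c^(n−1), f'(1+λ) = −2·(p+c)^(n−1), one has the uniform estimates |f(x+λ) − 2·c^(n−1)·x·(1−x)| ≤ K·c^(n−2) and |f'(x+λ) − 2·c^(n−1)·(1−2x)| ≤ K·c^(n−2) for all x ∈ [0,1]. -/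
/-!
Write `L y = x² y'' - m x y' + m y` with `m = 2n`, `C = c^(n-1)`, and `F` for the parabola
`2C (x - λ)(1 + λ - x)`, which meets the four boundary conditions up to
`f'(1+λ) + 2C = O(c^(n-2))`. Freezing `P(x-λ) = c` in the source changes it only by
`O((|A| C + |B| c^(n-2)) / c)`, so `y = f - F` solves `L y = s + t x² + E` with
`E = O((|s| + |t|) / c + c^(n-2))` and boundary data `O(c^(n-2))`.

Since `L 1 = m`, `L x² = (2 - m) x²` and `L x = L x^m = 0`, such a `y` is an element `q` of
`span {1, x, x², x^m}` plus a solution of `L ψ = E` with zero Cauchy data at `λ`; the reduction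
`((x ψ' - ψ) / x^m)' = L ψ / x^(m+1)` and the mean value inequality give `ψ, ψ' = O(sup |E|)`.
By Rolle's theorem no nonzero `q` vanishes to second order at both `λ` and `1 + λ`, so in this
four-dimensional space the coefficients of `q`, and with them `s` and `t`, are bounded by its
boundary data. For large `c` the term `(|s| + |t|) / c` is absorbed, and `y, y' = O(c^(n-2))`.
-/

open Set

-- The derivatives are separate arguments, so no junk value of `deriv` can enter.
def eulerOp (m : ℕ) (y y' y'' : ℝ → ℝ) (x : ℝ) : ℝ :=
  x ^ 2 * y'' x - m * x * y' x + m * y x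

lemma eulerOp_sub (m : ℕ) (y y' y'' z z' z'' : ℝ → ℝ) (x : ℝ) :
    eulerOp m (y - z) (y' - z') (y'' - z'') x = eulerOp m y y' y'' x - eulerOp m z z' z'' x := by
  simp only [eulerOp, Pi.sub_apply]
  ring

section EulerSol

variable (m : ℕ)

-- `1` and `x²` solve `eulerOp m y = m` and `= (2 - m) x²`, while `x` and `x ^ m` span its kernel.
def eulerSol (k : Fin 4 → ℝ) (x : ℝ) : ℝ := k 0 + k 1 * x + k 2 * x ^ 2 + k 3 * x ^ m

def eulerSolDeriv (k : Fin 4 → ℝ) (x : ℝ) : ℝ := k 1 + 2 * k 2 * x + m * k 3 * x ^ (m - 1)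

def eulerSolDeriv2 (k : Fin 4 → ℝ) (x : ℝ) : ℝ :=
  2 * k 2 + ((m * (m - 1) : ℕ) : ℝ) * k 3 * x ^ (m - 2)

lemma hasDerivAt_eulerSol (k : Fin 4 → ℝ) (x : ℝ) :
    HasDerivAt (eulerSol m k) (eulerSolDeriv m k x) x := by
  have := ((((hasDerivAt_id x).const_mul (k 1)).const_add (k 0)).add
    ((hasDerivAt_pow 2 x).const_mul (k 2))).add ((hasDerivAt_pow m x).const_mul (k 3))
  refine this.congr_deriv ?_
  simp only [eulerSolDeriv]
  push_cast
  ring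

lemma hasDerivAt_eulerSolDeriv (k : Fin 4 → ℝ) (x : ℝ) :
    HasDerivAt (eulerSolDeriv m k) (eulerSolDeriv2 m k x) x := by
  have := (((hasDerivAt_id x).const_mul (2 * k 2)).const_add (k 1)).add
    ((hasDerivAt_pow (m - 1) x).const_mul (m * k 3))
  refine this.congr_deriv ?_
  simp only [eulerSolDeriv2, Nat.sub_sub]
  rcases Nat.lt_or_ge m 1 with hm | hm
  · obtain rfl : m = 0 := by omega
    simp
  · push_cast [Nat.cast_sub hm]
    ring

lemma eulerOp_eulerSol (hm : 2 ≤ m) (k : Fin 4 → ℝ) (x : ℝ) :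
    eulerOp m (eulerSol m k) (eulerSolDeriv m k) (eulerSolDeriv2 m k) x
      = m * k 0 + (2 - m) * k 2 * x ^ 2 := by
  obtain ⟨i, rfl⟩ : ∃ i, m = i + 2 := ⟨m - 2, by omega⟩
  simp only [eulerOp, eulerSol, eulerSolDeriv, eulerSolDeriv2, Nat.add_sub_cancel,
    show i + 2 - 1 = i + 1 by omega]
  push_cast
  ring

def eulerSolBoundary (a b : ℝ) : (Fin 4 → ℝ) →ₗ[ℝ] (Fin 4 → ℝ) where
  toFun k := ![eulerSol m k a, eulerSolDeriv m k a, eulerSol m k b, eulerSolDeriv m k b]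
  map_add' k l := by
    ext i; fin_cases i <;> simp [eulerSol, eulerSolDeriv] <;> ring
  map_smul' r k := by
    ext i; fin_cases i <;> simp [eulerSol, eulerSolDeriv] <;> ring

variable {m} {a b : ℝ}

lemma eulerSolBoundary_injective (hm : 3 ≤ m) (ha : 0 < a) (hab : a < b) :
    Function.Injective (eulerSolBoundary m a b) := by
  refine (injective_iff_map_eq_zero _).2 fun k hk => ?_
  have hval := congrFun hk
  simp only [eulerSolBoundary, LinearMap.coe_mk, AddHom.coe_mk, Pi.zero_apply] at hval
  have hqa : eulerSol m k a = 0 := hval 0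
  have hq'a : eulerSolDeriv m k a = 0 := hval 1
  have hqb : eulerSol m k b = 0 := hval 2
  have hq'b : eulerSolDeriv m k b = 0 := hval 3
  -- Rolle three times: `q'' = 2 k₂ + m (m - 1) k₃ x ^ (m - 2)` would vanish at two points.
  obtain ⟨ξ, hξ, hq'ξ⟩ := exists_hasDerivAt_eq_zero hab
    (fun x _ => (hasDerivAt_eulerSol m k x).continuousAt.continuousWithinAt)
    (hqa.trans hqb.symm) fun x _ => hasDerivAt_eulerSol m k x
  obtain ⟨η₁, hη₁, hq''η₁⟩ := exists_hasDerivAt_eq_zero hξ.1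
    (fun x _ => (hasDerivAt_eulerSolDeriv m k x).continuousAt.continuousWithinAt)
    (hq'a.trans hq'ξ.symm) fun x _ => hasDerivAt_eulerSolDeriv m k x
  obtain ⟨η₂, hη₂, hq''η₂⟩ := exists_hasDerivAt_eq_zero hξ.2
    (fun x _ => (hasDerivAt_eulerSolDeriv m k x).continuousAt.continuousWithinAt)
    (hq'ξ.trans hq'b.symm) fun x _ => hasDerivAt_eulerSolDeriv m k x
  have hpow : η₁ ^ (m - 2) < η₂ ^ (m - 2) :=
    pow_lt_pow_left₀ (hη₁.2.trans hη₂.1) (ha.trans hη₁.1).le (by omega)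
  have hcoef : ((m * (m - 1) : ℕ) : ℝ) ≠ 0 := by
    have : m * (m - 1) ≠ 0 := Nat.mul_ne_zero (by omega) (by omega)
    exact_mod_cast this
  simp only [eulerSolDeriv2] at hq''η₁ hq''η₂
  have hk3 : k 3 = 0 := by
    have : ((m * (m - 1) : ℕ) : ℝ) * k 3 * (η₂ ^ (m - 2) - η₁ ^ (m - 2)) = 0 := by
      linear_combination hq''η₂ - hq''η₁
    rcases mul_eq_zero.1 this with h | h
    · exact (mul_eq_zero.1 h).resolve_left hcoef
    · exact absurd h (sub_pos.2 hpow).ne'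
  have hk2 : k 2 = 0 := by simpa [hk3] using hq''η₁
  simp only [eulerSol, hk2, hk3, zero_mul, add_zero] at hqa hqb
  have hk1 : k 1 = 0 := by
    have : k 1 * (b - a) = 0 := by linear_combination hqb - hqa
    simpa [(sub_pos.2 hab).ne'] using this
  have hk0 : k 0 = 0 := by simpa [hk1] using hqa
  ext i
  fin_cases i <;> assumption

lemma exists_norm_le_eulerSolBoundary (hm : 3 ≤ m) (ha : 0 < a) (hab : a < b) :
    ∃ K : ℝ, 0 ≤ K ∧ ∀ k, ‖k‖ ≤ K * ‖eulerSolBoundary m a b k‖ := by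
  obtain ⟨K, -, hK⟩ :=
    (eulerSolBoundary m a b).injective_iff_antilipschitz.1 (eulerSolBoundary_injective hm ha hab)
  exact ⟨K, K.2, ZeroHomClass.bound_of_antilipschitz _ hK⟩

lemma abs_eulerSol_add_abs_eulerSolDeriv_le (k : Fin 4 → ℝ) {x : ℝ} (hx : 0 ≤ x) (hxb : x ≤ b) :
    |eulerSol m k x| + |eulerSolDeriv m k x|
      ≤ (2 + 3 * b + b ^ 2 + b ^ m + m * b ^ (m - 1)) * ‖k‖ := by
  have hk (i : Fin 4) : |k i| ≤ ‖k‖ := by simpa using norm_le_pi_norm k i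
  have hterm (i : Fin 4) (C : ℝ) (e : ℕ) (hC : 0 ≤ C) : |C * k i * x ^ e| ≤ C * b ^ e * ‖k‖ := by
    rw [abs_mul, abs_mul, abs_of_nonneg hC, abs_of_nonneg (pow_nonneg hx e)]
    calc C * |k i| * x ^ e ≤ C * ‖k‖ * b ^ e := by gcongr; exact hk i
      _ = C * b ^ e * ‖k‖ := by ring
  have h0 := hterm 0 1 0 zero_le_one
  have h1 := hterm 1 1 1 zero_le_one
  have h2 := hterm 2 1 2 zero_le_one
  have h3 := hterm 3 1 m zero_le_one
  have h1' := hterm 1 1 0 zero_le_one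
  have h2' := hterm 2 2 1 zero_le_two
  have h3' := hterm 3 m (m - 1) (Nat.cast_nonneg m)
  simp only [one_mul, pow_zero, mul_one, pow_one] at h0 h1 h2 h3 h1' h2' h3'
  have e1 := abs_add_le (k 0 + k 1 * x + k 2 * x ^ 2) (k 3 * x ^ m)
  have e2 := abs_add_le (k 0 + k 1 * x) (k 2 * x ^ 2)
  have e3 := abs_add_le (k 0) (k 1 * x)
  have e4 := abs_add_le (k 1 + 2 * k 2 * x) (m * k 3 * x ^ (m - 1))
  have e5 := abs_add_le (k 1) (2 * k 2 * x)
  simp only [eulerSol, eulerSolDeriv]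
  linarith

lemma norm_eulerSolBoundary_le (k : Fin 4 → ℝ) :
    ‖eulerSolBoundary m a b k‖
      ≤ |eulerSol m k a| + |eulerSolDeriv m k a| + |eulerSol m k b| + |eulerSolDeriv m k b| := by
  refine (pi_norm_le_iff_of_nonneg (by positivity)).2 fun i => ?_
  fin_cases i <;> simp [eulerSolBoundary] <;>
    linarith [abs_nonneg (eulerSol m k a), abs_nonneg (eulerSolDeriv m k a),
      abs_nonneg (eulerSol m k b), abs_nonneg (eulerSolDeriv m k b)]

lemma exists_eulerSol_initial (hm : 3 ≤ m) (ha : 0 < a) (s t y₀ y₁ : ℝ) :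
    ∃ k : Fin 4 → ℝ, m * k 0 = s ∧ (2 - m) * k 2 = t ∧
      eulerSol m k a = y₀ ∧ eulerSolDeriv m k a = y₁ := by
  obtain ⟨i, rfl⟩ : ∃ i, m = i + 2 := ⟨m - 2, by omega⟩
  have hi : (i : ℝ) ≠ 0 := by exact_mod_cast (by omega : i ≠ 0)
  set k₀ := s / (i + 2)
  set k₂ := -t / i
  set r₀ := y₀ - k₀ - k₂ * a ^ 2
  set r₁ := y₁ - 2 * k₂ * a
  -- the Wronskian of `x` and `x ^ m` at `a` is `(m - 1) a ^ m`
  set β := (a * r₁ - r₀) / ((i + 1) * a ^ (i + 2))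
  refine ⟨![k₀, r₁ - (i + 2) * β * a ^ (i + 1), k₂, β], ?_, ?_, ?_, ?_⟩
  · simp only [k₀, Matrix.cons_val]
    push_cast
    field_simp
  · simp only [k₂, Matrix.cons_val]
    push_cast
    field_simp
    ring
  · have hw : ((i : ℝ) + 1) * a ^ (i + 2) ≠ 0 := by positivity
    simp only [eulerSol, β, r₀, Matrix.cons_val]
    field_simp
    ring
  · simp only [eulerSolDeriv, β, r₁, show i + 2 - 1 = i + 1 by omega]
    push_cast
    ring

end EulerSol

lemma abs_le_of_abs_deriv_le {g g' : ℝ → ℝ} {a b C : ℝ}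
    (hg : ∀ x ∈ Icc a b, HasDerivAt g (g' x) x) (hga : g a = 0)
    (hC : ∀ x ∈ Icc a b, |g' x| ≤ C) : ∀ x ∈ Icc a b, |g x| ≤ C * (b - a) := by
  intro x hx
  have hC0 : 0 ≤ C := (abs_nonneg _).trans (hC x hx)
  have := norm_image_sub_le_of_norm_deriv_le_segment' (fun y hy => (hg y hy).hasDerivWithinAt)
    (fun y hy => hC y (Ico_subset_Icc_self hy)) x hx
  rw [hga, sub_zero, Real.norm_eq_abs] at this
  exact this.trans (by gcongr; exact hx.2)

section EulerOp

variable {m : ℕ} {a b : ℝ} {y y' y'' : ℝ → ℝ} {x : ℝ}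

-- `x y' - y` is the Wronskian of `x` and `y`; the weight `x ^ m` turns its derivative into `L y`.
lemma hasDerivAt_wronskian (hm : 1 ≤ m) (hx : x ≠ 0) (hy : HasDerivAt y (y' x) x)
    (hy' : HasDerivAt y' (y'' x) x) :
    HasDerivAt (fun t => (t * y' t - y t) / t ^ m) (eulerOp m y y' y'' x / x ^ (m + 1)) x := by
  obtain ⟨i, rfl⟩ : ∃ i, m = i + 1 := ⟨m - 1, by omega⟩
  refine ((((hasDerivAt_id x).mul hy').sub hy).div (hasDerivAt_pow _ x)
    (pow_ne_zero _ hx)).congr_deriv ?_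
  simp only [eulerOp, Pi.mul_apply, Pi.sub_apply, id, Nat.add_sub_cancel]
  field_simp
  push_cast
  ring

lemma abs_wronskian_le_of_initial_eq_zero (hm : 1 ≤ m) (ha : 0 < a)
    (hy : ∀ x ∈ Icc a b, HasDerivAt y (y' x) x) (hy' : ∀ x ∈ Icc a b, HasDerivAt y' (y'' x) x)
    (hya : y a = 0) (hy'a : y' a = 0) {ε : ℝ} (hε : ∀ x ∈ Icc a b, |eulerOp m y y' y'' x| ≤ ε) :
    ∀ x ∈ Icc a b, |(x * y' x - y x) / x ^ m| ≤ (b - a) / a ^ (m + 1) * ε := by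
  have hpos {x} (hx : x ∈ Icc a b) : 0 < x := ha.trans_le hx.1
  refine fun x hx => (abs_le_of_abs_deriv_le
    (fun x hx => hasDerivAt_wronskian hm (hpos hx).ne' (hy x hx) (hy' x hx))
    (by simp [hya, hy'a]) (C := ε / a ^ (m + 1)) (fun x hx => ?_) x hx).trans_eq (by ring)
  rw [abs_div, abs_of_pos (pow_pos (hpos hx) _)]
  exact div_le_div₀ ((abs_nonneg _).trans (hε x hx)) (hε x hx) (pow_pos ha _)
    (pow_le_pow_left₀ ha.le hx.1 _)

lemma exists_bound_of_eulerOp_of_initial_eq_zero (hm : 1 ≤ m) (ha : 0 < a) (hab : a ≤ b) :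
    ∃ K : ℝ, 0 ≤ K ∧ ∀ (y y' y'' : ℝ → ℝ) (ε : ℝ),
      (∀ x ∈ Icc a b, HasDerivAt y (y' x) x) → (∀ x ∈ Icc a b, HasDerivAt y' (y'' x) x) →
      y a = 0 → y' a = 0 → (∀ x ∈ Icc a b, |eulerOp m y y' y'' x| ≤ ε) →
      ∀ x ∈ Icc a b, |y x| + |y' x| ≤ K * ε := by
  set KV := (b - a) / a ^ (m + 1)
  set KW := KV * b ^ m / a ^ 2 * (b - a)
  have hKV : 0 ≤ KV := div_nonneg (sub_nonneg.2 hab) (by positivity)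
  have hb : 0 ≤ b := ha.le.trans hab
  refine ⟨b * KW + (KV * b ^ m + b * KW) / a, by positivity,
    fun y y' y'' ε hy hy' hya hy'a hε => ?_⟩
  have hpos {x} (hx : x ∈ Icc a b) : 0 < x := ha.trans_le hx.1
  set V := fun t => (t * y' t - y t) / t ^ m
  have hV : ∀ x ∈ Icc a b, |V x| ≤ KV * ε :=
    abs_wronskian_le_of_initial_eq_zero hm ha hy hy' hya hy'a hε
  have hW' : ∀ x ∈ Icc a b, HasDerivAt (fun t => y t / t) (V x * x ^ m / x ^ 2) x := by
    refine fun x hx => ((hy x hx).div (hasDerivAt_id x) (hpos hx).ne').congr_deriv ?_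
    have := (hpos hx).ne'
    simp only [V, id]
    field_simp
  have hW : ∀ x ∈ Icc a b, |y x / x| ≤ KW * ε := by
    refine fun x hx => (abs_le_of_abs_deriv_le hW' (by simp [hya])
      (C := KV * ε * b ^ m / a ^ 2) (fun x hx => ?_) x hx).trans_eq (by ring)
    rw [abs_div, abs_mul, abs_of_pos (pow_pos (hpos hx) _), abs_of_pos (pow_pos (hpos hx) _)]
    have hVx := hV x hx
    have h0 : 0 ≤ KV * ε := (abs_nonneg _).trans hVx
    gcongr
    exacts [pow_nonneg (hpos hx).le m, (hpos hx).le, hx.2, hx.1]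
  intro x hx
  have hx0 := hpos hx
  have hVx := hV x hx
  have hWx := hW x hx
  have hKVε : 0 ≤ KV * ε := (abs_nonneg _).trans hVx
  have hKWε : 0 ≤ KW * ε := (abs_nonneg _).trans hWx
  have hyx : |y x| ≤ b * (KW * ε) := by
    rw [show y x = x * (y x / x) by field_simp, abs_mul, abs_of_pos hx0]
    exact mul_le_mul hx.2 hWx (abs_nonneg _) hb
  have hy'x : |y' x| ≤ (KV * ε * b ^ m + b * (KW * ε)) / a := by
    rw [show y' x = (V x * x ^ m + y x) / x by simp only [V]; field_simp; ring,
      abs_div, abs_of_pos hx0]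
    refine div_le_div₀ (by positivity) ((abs_add_le _ _).trans (add_le_add ?_ hyx)) ha hx.1
    rw [abs_mul, abs_of_pos (pow_pos hx0 m)]
    exact mul_le_mul hVx (pow_le_pow_left₀ hx0.le hx.2 m) (by positivity) hKVε
  calc |y x| + |y' x| ≤ b * (KW * ε) + (KV * ε * b ^ m + b * (KW * ε)) / a := add_le_add hyx hy'x
    _ = (b * KW + (KV * b ^ m + b * KW) / a) * ε := by ring

lemma exists_bound_of_eulerOp (hm : 3 ≤ m) (ha : 0 < a) (hab : a < b) :
    ∃ K : ℝ, 0 ≤ K ∧ ∀ (y y' y'' : ℝ → ℝ) (s t ε : ℝ),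
      (∀ x ∈ Icc a b, HasDerivAt y (y' x) x) → (∀ x ∈ Icc a b, HasDerivAt y' (y'' x) x) →
      (∀ x ∈ Icc a b, |eulerOp m y y' y'' x - (s + t * x ^ 2)| ≤ ε) →
      ∀ x ∈ Icc a b,
        |s| + |t| + (|y x| + |y' x|) ≤ K * (|y a| + |y' a| + |y b| + |y' b| + ε) := by
  obtain ⟨K₁, hK₁0, hK₁⟩ := exists_bound_of_eulerOp_of_initial_eq_zero (m := m) (by omega) ha hab.le
  obtain ⟨K₂, hK₂0, hK₂⟩ := exists_norm_le_eulerSolBoundary hm ha hab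
  set Kp : ℝ := m + |2 - (m : ℝ)| + (2 + 3 * b + b ^ 2 + b ^ m + m * b ^ (m - 1))
  have hKp : 0 ≤ Kp := by have := ha.trans hab; positivity
  refine ⟨Kp * K₂ * (1 + K₁) + K₁, by positivity, fun y y' y'' s t ε hy hy' hε x hx => ?_⟩
  obtain ⟨k, hk0, hk2, hka, hk'a⟩ := exists_eulerSol_initial hm ha s t (y a) (y' a)
  -- `y` minus the `eulerSol` with the same source and the same Cauchy data at `a`
  have hψ := hK₁ (y - eulerSol m k) (y' - eulerSolDeriv m k) (y'' - eulerSolDeriv2 m k) ε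
    (fun x hx => (hy x hx).sub (hasDerivAt_eulerSol m k x))
    (fun x hx => (hy' x hx).sub (hasDerivAt_eulerSolDeriv m k x))
    (by simp [hka]) (by simp [hk'a])
    (fun x hx => by rw [eulerOp_sub, eulerOp_eulerSol m (by omega), hk0, hk2]; exact hε x hx)
  simp only [Pi.sub_apply] at hψ
  set Δ := |y a| + |y' a| + |y b| + |y' b| + ε with hΔ
  have hεΔ : ε ≤ Δ := by
    linarith [abs_nonneg (y a), abs_nonneg (y' a), abs_nonneg (y b), abs_nonneg (y' b)]
  have hε0 : 0 ≤ ε := (abs_nonneg _).trans (hε a ⟨le_rfl, hab.le⟩)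
  have hk : ‖k‖ ≤ K₂ * (Δ + K₁ * ε) := by
    refine (hK₂ k).trans (mul_le_mul_of_nonneg_left ((norm_eulerSolBoundary_le k).trans ?_) hK₂0)
    have hqb := abs_sub (y b) (y b - eulerSol m k b)
    have hq'b := abs_sub (y' b) (y' b - eulerSolDeriv m k b)
    simp only [sub_sub_cancel] at hqb hq'b
    rw [hka, hk'a, hΔ]
    linarith [hψ b ⟨hab.le, le_rfl⟩]
  have hk' (i : Fin 4) : |k i| ≤ ‖k‖ := by simpa using norm_le_pi_norm k i
  have hyx : |y x| + |y' x| ≤ (2 + 3 * b + b ^ 2 + b ^ m + m * b ^ (m - 1)) * ‖k‖ + K₁ * ε := by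
    have hq := abs_eulerSol_add_abs_eulerSolDeriv_le (m := m) k (ha.le.trans hx.1) hx.2
    have h1 := abs_add_le (eulerSol m k x) (y x - eulerSol m k x)
    have h2 := abs_add_le (eulerSolDeriv m k x) (y' x - eulerSolDeriv m k x)
    simp only [add_sub_cancel] at h1 h2
    linarith [hψ x hx]
  calc |s| + |t| + (|y x| + |y' x|) ≤ Kp * ‖k‖ + K₁ * ε := by
        rw [← hk0, ← hk2, abs_mul, abs_mul, Nat.abs_cast]
        nlinarith [hk' 0, hk' 2, abs_nonneg (2 - (m : ℝ))]
    _ ≤ Kp * (K₂ * (Δ + K₁ * Δ)) + K₁ * Δ := by gcongr; exact hk.trans (by gcongr)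
    _ = (Kp * K₂ * (1 + K₁) + K₁) * Δ := by ring

lemma exists_bound_of_eulerOp_perturbed (hm : 3 ≤ m) (ha : 0 < a) (hab : a < b) :
    ∃ δ > 0, ∃ K : ℝ, 0 ≤ K ∧ ∀ (y y' y'' : ℝ → ℝ) (s t η ε : ℝ),
      (∀ x ∈ Icc a b, HasDerivAt y (y' x) x) → (∀ x ∈ Icc a b, HasDerivAt y' (y'' x) x) →
      η ≤ δ → (∀ x ∈ Icc a b, |eulerOp m y y' y'' x - (s + t * x ^ 2)| ≤ η * (|s| + |t|) + ε) →
      ∀ x ∈ Icc a b, |y x| + |y' x| ≤ K * (|y a| + |y' a| + |y b| + |y' b| + ε) := by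
  obtain ⟨K, hK0, hK⟩ := exists_bound_of_eulerOp hm ha hab
  refine ⟨1 / (K + 1), by positivity, K, hK0, fun y y' y'' s t η ε hy hy' hη hε x hx => ?_⟩
  have hbound := hK y y' y'' s t _ hy hy' hε x hx
  -- the perturbation costs `K η (|s| + |t|) ≤ |s| + |t|`, which the left side absorbs
  have hKη : K * η ≤ 1 := by
    calc K * η ≤ K * (1 / (K + 1)) := by gcongr
      _ ≤ 1 := by rw [mul_one_div, div_le_one (by positivity)]; linarith
  have : K * (η * (|s| + |t|)) ≤ |s| + |t| := by
    rw [← mul_assoc]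
    exact mul_le_of_le_one_left (by positivity) hKη
  nlinarith

end EulerOp

lemma mul_abs_pow_sub_pow_le {x c r : ℝ} (hxc : |x - c| ≤ r) (hrc : r ≤ c) (k : ℕ) :
    c * |x ^ k - c ^ k| ≤ k * r * (2 * c) ^ k := by
  have hr : 0 ≤ r := (abs_nonneg _).trans hxc
  have hc : 0 ≤ c := hr.trans hrc
  rcases k with _ | k
  · simp
  have hmax : max |x| |c| ≤ 2 * c := by
    refine max_le ?_ (by rw [abs_of_nonneg hc]; linarith)
    calc |x| = |(x - c) + c| := by ring_nf
      _ ≤ |x - c| + |c| := abs_add_le _ _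
      _ ≤ 2 * c := by rw [abs_of_nonneg hc]; linarith
  calc c * |x ^ (k + 1) - c ^ (k + 1)|
      ≤ c * (r * (k + 1 : ℕ) * (2 * c) ^ k) := by
        gcongr
        refine (abs_pow_sub_pow_le x c (k + 1)).trans ?_
        rw [Nat.add_sub_cancel]
        gcongr
    _ ≤ (k + 1 : ℕ) * r * (2 * c) ^ (k + 1) := by
        rw [pow_succ]
        have : 0 ≤ r * (k + 1 : ℕ) * (2 * c) ^ k := by positivity
        nlinarith

lemma abs_sub_frozen_source_le {A B P c r w W : ℝ} (j : ℕ) (hP : |P - c| ≤ r) (hrc : r ≤ c)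
    (hc : 0 < c) (hw : 0 ≤ w) (hwW : w ≤ W) :
    |(-A * P ^ (j + 1) + B * w * P ^ j) - (-(A * c ^ (j + 1)) + B * c ^ j * w)|
      ≤ (j + 1) * r * 2 ^ (j + 1) * (1 + W) / c * (|A * c ^ (j + 1)| + |B * c ^ j|) := by
  have hr : 0 ≤ r := (abs_nonneg _).trans hP
  have hW : 0 ≤ W := hw.trans hwW
  have h1 := mul_abs_pow_sub_pow_le hP hrc (j + 1)
  have h0 := mul_abs_pow_sub_pow_le hP hrc j
  rw [mul_pow] at h1 h0
  push_cast at h1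
  have hj : (j : ℝ) * 2 ^ j ≤ (j + 1) * 2 ^ (j + 1) := by
    rw [pow_succ]; nlinarith [pow_pos (two_pos (α := ℝ)) j]
  have h0' : c * |P ^ j - c ^ j| ≤ (j + 1) * r * 2 ^ (j + 1) * c ^ j :=
    calc c * |P ^ j - c ^ j| ≤ j * r * (2 ^ j * c ^ j) := h0
      _ = r * c ^ j * (j * 2 ^ j) := by ring
      _ ≤ r * c ^ j * ((j + 1) * 2 ^ (j + 1)) := by gcongr
      _ = (j + 1) * r * 2 ^ (j + 1) * c ^ j := by ring
  rw [div_mul_eq_mul_div, le_div_iff₀ hc, abs_mul A, abs_mul B, abs_of_pos (pow_pos hc _),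
    abs_of_pos (pow_pos hc _), mul_comm,
    show (-A * P ^ (j + 1) + B * w * P ^ j) - (-(A * c ^ (j + 1)) + B * c ^ j * w)
      = -A * (P ^ (j + 1) - c ^ (j + 1)) + B * w * (P ^ j - c ^ j) by ring]
  have habs := abs_add_le (-A * (P ^ (j + 1) - c ^ (j + 1))) (B * w * (P ^ j - c ^ j))
  rw [abs_mul, abs_mul, abs_mul, abs_neg, abs_of_nonneg hw] at habs
  calc c * |-A * (P ^ (j + 1) - c ^ (j + 1)) + B * w * (P ^ j - c ^ j)|
      ≤ |A| * (c * |P ^ (j + 1) - c ^ (j + 1)|) + |B| * w * (c * |P ^ j - c ^ j|) := by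
        nlinarith
    _ ≤ |A| * ((j + 1) * r * (2 ^ (j + 1) * c ^ (j + 1)))
        + |B| * W * ((j + 1) * r * 2 ^ (j + 1) * c ^ j) := by
        gcongr
    _ ≤ (j + 1) * r * 2 ^ (j + 1) * (1 + W) * (|A| * c ^ (j + 1) + |B| * c ^ j) := by
        have : 0 ≤ (j + 1) * r * 2 ^ (j + 1) * |A| * c ^ (j + 1) * W := by positivity
        have : 0 ≤ (j + 1) * r * 2 ^ (j + 1) * |B| * c ^ j := by positivity
        nlinarith

def parabolaCoeffs (C lam : ℝ) : Fin 4 → ℝ :=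
  ![-2 * C * lam * (1 + lam), 2 * C * (1 + 2 * lam), -2 * C, 0]

lemma eulerSol_parabolaCoeffs (m : ℕ) (C lam x : ℝ) :
    eulerSol m (parabolaCoeffs C lam) x = 2 * C * (x - lam) * (1 + lam - x) := by
  simp [eulerSol, parabolaCoeffs]
  ring

lemma eulerSolDeriv_parabolaCoeffs (m : ℕ) (C lam x : ℝ) :
    eulerSolDeriv m (parabolaCoeffs C lam) x = 2 * C * (1 + 2 * lam - 2 * x) := by
  simp [eulerSolDeriv, parabolaCoeffs]
  ring

lemma exists_abs_sub_parabola_le {m : ℕ} (hm : 3 ≤ m) {lam : ℝ} (hlam : 0 < lam) {D : ℝ}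
    (hD : 0 ≤ D) (G : ℝ) :
    ∃ c₀ K : ℝ, ∀ c ≥ c₀, ∀ (α β C : ℝ) (f f' f'' : ℝ → ℝ), 0 ≤ C →
      (∀ x ∈ Icc lam (1 + lam), HasDerivAt f (f' x) x) →
      (∀ x ∈ Icc lam (1 + lam), HasDerivAt f' (f'' x) x) →
      (∀ x ∈ Icc lam (1 + lam),
        |eulerOp m f f' f'' x - (-α + β * x ^ 2)| ≤ D / c * (|α| + |β|)) →
      f lam = 0 → f (1 + lam) = 0 → f' lam = 2 * C → |f' (1 + lam) + 2 * C| ≤ G * C / c →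
      ∀ x ∈ Icc lam (1 + lam), |f x - 2 * C * (x - lam) * (1 + lam - x)|
        + |f' x - 2 * C * (1 + 2 * lam - 2 * x)| ≤ K * C / c := by
  obtain ⟨δ, hδ, K, hK0, hK⟩ :=
    exists_bound_of_eulerOp_perturbed hm hlam (by linarith : lam < 1 + lam)
  have hm3 : (3 : ℝ) ≤ m := by exact_mod_cast hm
  set M : ℝ := 2 * m * lam * (1 + lam) + 2 * (m - 2) with hM
  refine ⟨1 + D / δ, K * (G + D * M), fun c hc α β C f f' f'' hC hf hf' hode hfa hfb hf'a hf'b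
    x hx => ?_⟩
  have hc0 : 0 < c := by linarith [div_nonneg hD hδ.le]
  have hDc : D / c ≤ δ := by
    rw [div_le_iff₀ hc0, ← div_le_iff₀' hδ]
    linarith
  set kF := parabolaCoeffs C lam
  -- subtracting the parabola shifts the source by `L kF = m kF₀ + (2 - m) kF₂ x ^ 2`
  set s := -α + 2 * m * lam * (1 + lam) * C
  set t := β - 2 * (m - 2) * C
  have hst : |α| + |β| ≤ |s| + |t| + M * C := by
    have h1 := abs_sub (2 * m * lam * (1 + lam) * C) s
    have h2 := abs_add_le t (2 * (m - 2) * C)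
    rw [abs_of_nonneg (show (0 : ℝ) ≤ 2 * m * lam * (1 + lam) * C by positivity),
      show 2 * m * lam * (1 + lam) * C - s = α by ring] at h1
    rw [abs_of_nonneg (show (0 : ℝ) ≤ 2 * (m - 2) * C from mul_nonneg (by linarith) hC),
      show t + 2 * (m - 2) * C = β by ring] at h2
    rw [hM]
    linarith
  have hres : ∀ x ∈ Icc lam (1 + lam), |eulerOp m (f - eulerSol m kF) (f' - eulerSolDeriv m kF)
      (f'' - eulerSolDeriv2 m kF) x - (s + t * x ^ 2)| ≤ D / c * (|s| + |t|) + D * M * C / c := by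
    intro x hx
    rw [eulerOp_sub, eulerOp_eulerSol m (by omega),
      show eulerOp m f f' f'' x - (m * kF 0 + (2 - m) * kF 2 * x ^ 2) - (s + t * x ^ 2)
        = eulerOp m f f' f'' x - (-α + β * x ^ 2) by simp [kF, parabolaCoeffs, s, t]; ring]
    calc _ ≤ D / c * (|α| + |β|) := hode x hx
      _ ≤ D / c * (|s| + |t| + M * C) := by gcongr
      _ = D / c * (|s| + |t|) + D * M * C / c := by ring
  have hbd := hK _ _ _ s t (D / c) (D * M * C / c)
    (fun x hx => (hf x hx).sub (hasDerivAt_eulerSol m kF x))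
    (fun x hx => (hf' x hx).sub (hasDerivAt_eulerSolDeriv m kF x)) hDc hres x hx
  simp only [Pi.sub_apply, kF, eulerSol_parabolaCoeffs, eulerSolDeriv_parabolaCoeffs, hfa, hfb,
    hf'a, sub_self, mul_zero, abs_zero, add_sub_cancel_right, mul_one, zero_add] at hbd
  calc _ ≤ K * (G * C / c + D * M * C / c) := by
        refine hbd.trans (by gcongr; rwa [show f' (1 + lam) - 2 * C * (1 + 2 * lam - 2 * (1 + lam))
          = f' (1 + lam) + 2 * C by ring])
    _ = K * (G + D * M) * C / c := by ring

lemma exists_abs_sub_parabola_le_of_bvp {m : ℕ} (hm : 3 ≤ m) (j : ℕ) {lam : ℝ} (hlam : 0 < lam)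
    (p : ℝ) :
    ∃ c₀ K : ℝ, 0 < K ∧ ∀ c ≥ c₀, ∀ (A B : ℝ) (f f' f'' : ℝ → ℝ),
      (∀ x ∈ Icc lam (1 + lam), HasDerivAt f (f' x) x) →
      (∀ x ∈ Icc lam (1 + lam), HasDerivAt f' (f'' x) x) →
      (∀ x ∈ Icc lam (1 + lam), eulerOp m f f' f'' x
        = -A * (p * (x - lam) + c) ^ (j + 1) + B * x ^ 2 * (p * (x - lam) + c) ^ j) →
      f lam = 0 → f (1 + lam) = 0 → f' lam = 2 * c ^ (j + 1) →
      f' (1 + lam) = -2 * (p + c) ^ (j + 1) →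
      ∀ x ∈ Icc (0 : ℝ) 1, |f (x + lam) - 2 * c ^ (j + 1) * x * (1 - x)|
        + |f' (x + lam) - 2 * c ^ (j + 1) * (1 - 2 * x)| ≤ K * c ^ j := by
  set D : ℝ := (j + 1) * |p| * 2 ^ (j + 1) * (1 + (1 + lam) ^ 2)
  obtain ⟨c₀, K, hK⟩ := exists_abs_sub_parabola_le hm hlam (by positivity : 0 ≤ D)
    (2 * ((j + 1) * |p| * 2 ^ (j + 1)))
  refine ⟨max c₀ (1 + |p|), |K| + 1, by positivity,
    fun c hc A B f f' f'' hf hf' hode hfa hfb hf'a hf'b x hx => ?_⟩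
  have hpc : |p| ≤ c := by linarith [le_max_right c₀ (1 + |p|)]
  have hc0 : 0 < c := by linarith [le_max_right c₀ (1 + |p|), abs_nonneg p]
  have hsource : ∀ x ∈ Icc lam (1 + lam), |eulerOp m f f' f'' x
      - (-(A * c ^ (j + 1)) + B * c ^ j * x ^ 2)| ≤ D / c * (|A * c ^ (j + 1)| + |B * c ^ j|) := by
    intro x hx
    have hP : |p * (x - lam) + c - c| ≤ |p| := by
      rw [add_sub_cancel_right, abs_mul]
      refine mul_le_of_le_one_right (abs_nonneg p) ?_
      rw [abs_le]; constructor <;> linarith [hx.1, hx.2]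
    rw [hode x hx]
    exact abs_sub_frozen_source_le j hP hpc hc0 (sq_nonneg x)
      (pow_le_pow_left₀ (by linarith [hx.1]) hx.2 2)
  have hslope : |f' (1 + lam) + 2 * c ^ (j + 1)|
      ≤ 2 * ((j + 1) * |p| * 2 ^ (j + 1)) * c ^ (j + 1) / c := by
    have h := mul_abs_pow_sub_pow_le (x := p + c) (by simp) hpc (j + 1)
    rw [mul_pow] at h
    push_cast at h
    rw [hf'b, show -2 * (p + c) ^ (j + 1) + 2 * c ^ (j + 1)
      = -2 * ((p + c) ^ (j + 1) - c ^ (j + 1)) by ring, abs_mul, abs_neg, abs_two, le_div_iff₀ hc0]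
    linarith
  calc _ = |f (x + lam) - 2 * c ^ (j + 1) * (x + lam - lam) * (1 + lam - (x + lam))|
        + |f' (x + lam) - 2 * c ^ (j + 1) * (1 + 2 * lam - 2 * (x + lam))| := by ring_nf
    _ ≤ K * c ^ (j + 1) / c := hK c (le_of_max_le_left hc) (A * c ^ (j + 1)) (B * c ^ j)
        (c ^ (j + 1)) f f' f'' (by positivity) hf hf' hsource hfa hfb hf'a hslope (x + lam)
        ⟨by linarith [hx.1], by linarith [hx.2]⟩
    _ = K * c ^ j := by rw [pow_succ]; field_simp
    _ ≤ (|K| + 1) * c ^ j := by gcongr; linarith [le_abs_self K]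

lemma ContDiffOn.hasDerivAt_deriv_of_isOpen {f : ℝ → ℝ} {U : Set ℝ} (hf : ContDiffOn ℝ 2 f U)
    (hU : IsOpen U) {x : ℝ} (hx : x ∈ U) :
    HasDerivAt f (deriv f x) x ∧ HasDerivAt (deriv f) (deriv (deriv f) x) x :=
  ⟨((hf.differentiableOn (by norm_num) x hx).differentiableAt (hU.mem_nhds hx)).hasDerivAt,
    (((hf.deriv_of_isOpen hU (by norm_num : (1 : WithTop ℕ∞) + 1 ≤ 2)).differentiableOn
      one_ne_zero x hx).differentiableAt (hU.mem_nhds hx)).hasDerivAt⟩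

/-- Uniform asymptotics of the solution of the boundary value problem: the solution `f_c`
of `x² f'' - m x f' + m f = -A·P(x-λ)^(n-1) + B·x²·P(x-λ)^(n-2)` with the boundary
conditions `f(λ) = f(1+λ) = 0`, `f'(λ) = 2c^(n-1)`, `f'(1+λ) = -2(p+c)^(n-1)` satisfies,
uniformly for `x ∈ [0,1]`,
`f_c(x+λ) = 2c^(n-1)·x(1-x) + O(c^(n-2))` and `f_c'(x+λ) = 2c^(n-1)·(1-2x) + O(c^(n-2))`. -/
theorem ruled_bvp_uniform_asymptotics
    (n : ℕ) (hn : 2 ≤ n) (lam p : ℝ) (hlam : 0 < lam) :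
    ∃ c₀ K : ℝ, 0 < K ∧ ∀ c ≥ c₀, ∀ A B : ℝ, ∀ f : ℝ → ℝ,
      (∃ a b : ℝ, a < lam ∧ 1 + lam < b ∧ ContDiffOn ℝ 2 f (Set.Ioo a b)) →
      (∀ x ∈ Set.Icc lam (1 + lam),
        x ^ 2 * deriv (deriv f) x - (2 * n : ℝ) * x * deriv f x + (2 * n : ℝ) * f x
          = -A * (p * (x - lam) + c) ^ (n - 1) + B * x ^ 2 * (p * (x - lam) + c) ^ (n - 2)) →
      f lam = 0 → f (1 + lam) = 0 →
      deriv f lam = 2 * c ^ (n - 1) → deriv f (1 + lam) = -2 * (p + c) ^ (n - 1) →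
      ∀ x ∈ Set.Icc (0 : ℝ) 1,
        |f (x + lam) - 2 * c ^ (n - 1) * x * (1 - x)| ≤ K * c ^ (n - 2) ∧
        |deriv f (x + lam) - 2 * c ^ (n - 1) * (1 - 2 * x)| ≤ K * c ^ (n - 2) := by
  obtain ⟨j, rfl⟩ : ∃ j, n = j + 2 := ⟨n - 2, by omega⟩
  obtain ⟨c₀, K, hK0, hK⟩ :=
    exists_abs_sub_parabola_le_of_bvp (m := 2 * (j + 2)) (by omega) j hlam p
  refine ⟨c₀, K, hK0, fun c hc A B f ⟨a, b, ha, hb, hf⟩ hode hfa hfb hf'a hf'b x hx => ?_⟩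
  have hreg : ∀ y ∈ Icc lam (1 + lam), HasDerivAt f (deriv f y) y ∧
      HasDerivAt (deriv f) (deriv (deriv f) y) y := fun y hy =>
    hf.hasDerivAt_deriv_of_isOpen isOpen_Ioo ⟨ha.trans_le hy.1, hy.2.trans_lt hb⟩
  simp only [show j + 2 - 1 = j + 1 by omega, Nat.add_sub_cancel] at hode hf'a hf'b ⊢
  have hbd := hK c hc A B f (deriv f) (deriv (deriv f)) (fun y hy => (hreg y hy).1)
    (fun y hy => (hreg y hy).2) (fun y hy => by rw [← hode y hy, eulerOp]; push_cast; ring)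
    hfa hfb hf'a hf'b x hx
  exact ⟨(le_add_of_nonneg_right (abs_nonneg _)).trans hbd,
    (le_add_of_nonneg_left (abs_nonneg _)).trans hbd⟩
end

section
/- Let n ≥ 2 be a natural number, m := 2n, and λ > 0 a real number. Consider the 4×4 real matrix M_inf with rows (−1/m, −λ²/(m−2), λ, λ^m), (−1/m, −(1+λ)²/(m−2), 1+λ, (1+λ)^m), (0, −λ/(n−1), 1, m·λ^(m−1)), (0, −(1+λ)/(n−1), 1, m·(1+λ)^(m−1)). Then M_inf is invertible, and the unique solution x ∈ ℝ⁴ of the linear system M_inf · x = (0, 0, 2, −2)ᵀ is x = (2·m·λ·(1+λ), 2·(m−2), 2·(1+2λ), 0). -/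
/-!
With `a = λ`, `b = 1 + λ` and `m = 2n`, cofactor expansion gives
`det M_∞ = (m (a^(m-1) + b^(m-1)) - 2 (b^m - a^m)) / (4n(n-1))`. Since `b - a = 1`, the numerator
equals `∑_{i<m} (b^i - a^i) (b^(m-1-i) - a^(m-1-i))`, a sum of nonnegative terms that is positive
as soon as `m ≥ 3` and `0 ≤ a < b`. So `M_∞` is invertible, and the stated vector is the unique
solution because it solves the system, as one checks by substitution.
-/

open Finset Matrix

section CommRing
variable {R : Type*} [CommRing R]

theorem mul_sum_range_sub_pow_mul_sub_pow (a b : R) (j : ℕ) :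
    (b - a) * ∑ i ∈ range (j + 1), (b ^ i - a ^ i) * (b ^ (j - i) - a ^ (j - i)) =
      (j + 1) * (b - a) * (a ^ j + b ^ j) - 2 * (b ^ (j + 1) - a ^ (j + 1)) := by
  have hba : (∑ i ∈ range (j + 1), b ^ i * a ^ (j - i)) * (b - a) = b ^ (j + 1) - a ^ (j + 1) := by
    simpa using geom_sum₂_mul b a (j + 1)
  have hab : (∑ i ∈ range (j + 1), a ^ i * b ^ (j - i)) * (a - b) = a ^ (j + 1) - b ^ (j + 1) := by
    simpa using geom_sum₂_mul a b (j + 1)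
  have hterm : ∀ i ∈ range (j + 1), (b ^ i - a ^ i) * (b ^ (j - i) - a ^ (j - i)) =
      (a ^ j + b ^ j) - b ^ i * a ^ (j - i) - a ^ i * b ^ (j - i) := by
    intro i hi
    have hsplit : j = i + (j - i) := by grind
    rw [hsplit, pow_add, pow_add, ← hsplit]
    ring
  rw [sum_congr rfl hterm, sum_sub_distrib, sum_sub_distrib, sum_const, card_range, nsmul_eq_mul]
  push_cast
  linear_combination (-1 : R) * hba + hab

theorem det_fin_four_of (a b c d e f g h i j k l p q r s : R) :
    (Matrix.of ![![a, b, c, d], ![e, f, g, h], ![i, j, k, l], ![p, q, r, s]]).det =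
      a * (f * (k * s - l * r) - g * (j * s - l * q) + h * (j * r - k * q))
      - b * (e * (k * s - l * r) - g * (i * s - l * p) + h * (i * r - k * p))
      + c * (e * (j * s - l * q) - f * (i * s - l * p) + h * (i * q - j * p))
      - d * (e * (j * r - k * q) - f * (i * r - k * p) + g * (i * q - j * p)) := by
  simp [det_succ_row_zero, Fin.sum_univ_succ, Fin.succAbove]
  ring

end CommRing

variable {R : Type*} [CommRing R] [LinearOrder R] [IsStrictOrderedRing R] in
-- The trapezoid rule for the convex function `t ↦ k t^(k-1)` on `[a, b]`, strict for `k ≥ 3`.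
theorem two_mul_pow_sub_pow_lt {a b : R} (ha : 0 ≤ a) (hab : a < b) {k : ℕ} (hk : 3 ≤ k) :
    2 * (b ^ k - a ^ k) < k * (b - a) * (a ^ (k - 1) + b ^ (k - 1)) := by
  obtain ⟨j, rfl⟩ : ∃ j, k = j + 1 := ⟨k - 1, by omega⟩
  have hsum : 0 < ∑ i ∈ range (j + 1), (b ^ i - a ^ i) * (b ^ (j - i) - a ^ (j - i)) := by
    have hle : ∀ l : ℕ, 0 ≤ b ^ l - a ^ l := fun l =>
      sub_nonneg.mpr (pow_le_pow_left₀ ha hab.le l)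
    have hlt : ∀ l : ℕ, l ≠ 0 → 0 < b ^ l - a ^ l := fun l hl =>
      sub_pos.mpr (pow_lt_pow_left₀ hab ha hl)
    refine sum_pos' (fun i _ => mul_nonneg (hle i) (hle _)) ⟨1, by simp; omega, ?_⟩
    exact mul_pos (hlt 1 one_ne_zero) (hlt _ (by omega))
  have hidentity := mul_sum_range_sub_pow_mul_sub_pow a b j
  push_cast
  linarith [mul_pos (sub_pos.mpr hab) hsum]

noncomputable def limitMatrix (n : ℕ) (lam : ℝ) : Matrix (Fin 4) (Fin 4) ℝ :=
  let m : ℕ := 2 * n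
  Matrix.of
    ![![-1 / (m : ℝ), -lam ^ 2 / ((m : ℝ) - 2), lam, lam ^ m],
      ![-1 / (m : ℝ), -(1 + lam) ^ 2 / ((m : ℝ) - 2), 1 + lam, (1 + lam) ^ m],
      ![0, -lam / ((n : ℝ) - 1), 1, (m : ℝ) * lam ^ (m - 1)],
      ![0, -(1 + lam) / ((n : ℝ) - 1), 1, (m : ℝ) * (1 + lam) ^ (m - 1)]]

theorem limitMatrix_det {n : ℕ} (hn : 2 ≤ n) (lam : ℝ) :
    (limitMatrix n lam).det =
      ((2 * n : ℕ) * (lam ^ (2 * n - 1) + (1 + lam) ^ (2 * n - 1))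
        - 2 * ((1 + lam) ^ (2 * n) - lam ^ (2 * n))) / (4 * n * (n - 1)) := by
  have hn1 : (n : ℝ) - 1 ≠ 0 := sub_ne_zero.mpr (by norm_cast; omega)
  have hn0 : (n : ℝ) ≠ 0 := by norm_cast; omega
  have hpow : ∀ x : ℝ, x ^ (2 * n) = x ^ (2 * n - 1) * x := fun x => by
    rw [← pow_succ]; congr 1; omega
  rw [limitMatrix, det_fin_four_of, hpow, hpow]
  push_cast
  field_simp
  ring

theorem limitMatrix_mulVec {n : ℕ} (hn : 2 ≤ n) (lam : ℝ) :
    limitMatrix n lam *ᵥ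
        ![2 * (2 * n : ℕ) * lam * (1 + lam), 2 * (((2 * n : ℕ) : ℝ) - 2), 2 * (1 + 2 * lam), 0] =
      ![0, 0, 2, -2] := by
  have hn1 : (n : ℝ) - 1 ≠ 0 := sub_ne_zero.mpr (by norm_cast; omega)
  have hn0 : (n : ℝ) ≠ 0 := by norm_cast; omega
  ext i
  fin_cases i <;> simp [limitMatrix, mulVec, dotProduct, Fin.sum_univ_four] <;> field_simp <;> ring

theorem limitMatrix_det_pos {n : ℕ} (hn : 2 ≤ n) {lam : ℝ} (hlam : 0 < lam) :
    0 < (limitMatrix n lam).det := by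
  have hconvex := two_mul_pow_sub_pow_lt hlam.le (lt_one_add lam) (k := 2 * n) (by omega)
  have hn1 : (1 : ℝ) < n := by norm_cast
  rw [add_sub_cancel_right, mul_one] at hconvex
  rw [limitMatrix_det hn]
  exact div_pos (by linarith) (by nlinarith)

/-- The leading-order (`c → ∞`) coefficient matrix `M_∞` of the linear system determining
the boundary value problem on ruled manifolds is invertible, and the unique solution
of `M_∞ · x = (0,0,2,-2)ᵀ` is `x = (2mλ(1+λ), 2(m-2), 2(1+2λ), 0)`, where `m = 2n`. -/
theorem limit_matrix_invertible_and_solution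
    (n : ℕ) (hn : 2 ≤ n) (lam : ℝ) (hlam : 0 < lam) :
    let m : ℕ := 2 * n
    let M_inf : Matrix (Fin 4) (Fin 4) ℝ :=
      Matrix.of
        ![![-1 / (m : ℝ), -lam ^ 2 / ((m : ℝ) - 2), lam, lam ^ m],
          ![-1 / (m : ℝ), -(1 + lam) ^ 2 / ((m : ℝ) - 2), 1 + lam, (1 + lam) ^ m],
          ![0, -lam / ((n : ℝ) - 1), 1, (m : ℝ) * lam ^ (m - 1)],
          ![0, -(1 + lam) / ((n : ℝ) - 1), 1, (m : ℝ) * (1 + lam) ^ (m - 1)]]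
    IsUnit M_inf ∧
      ∀ x : Fin 4 → ℝ,
        M_inf *ᵥ x = ![0, 0, 2, -2] ↔
          x = ![2 * (m : ℝ) * lam * (1 + lam), 2 * ((m : ℝ) - 2), 2 * (1 + 2 * lam), 0] := by
  intro m M_inf
  have hunit : IsUnit M_inf :=
    (isUnit_iff_isUnit_det _).mpr (limitMatrix_det_pos hn hlam).ne'.isUnit
  refine ⟨hunit, fun x => ?_⟩
  rw [← limitMatrix_mulVec hn lam]
  exact (mulVec_injective_iff_isUnit.mpr hunit).eq_iff
end

section
/- Let n be a positive integer, let a : Fin n → ℝ and a₀ ∈ ℝ, let U ⊆ ℝⁿ be an open set on which the affine function u(z) := (∑_i a i · z i) + a₀ is strictly positive, and let H : U → Matrix (Fin n) (Fin n) ℝ be twice continuously differentiable with H(z) symmetric (H(z) i j = H(z) j i) for all z ∈ U. Then at every point of U one has ∑_{i,j} ∂_i ∂_j (u⁻¹ · H i j) = u⁻¹ · ∑_{i,j} ∂_i ∂_j (H i j) − 2·u⁻² · ∑_{i,j} a i · ∂_j (H i j) + 2·u⁻³ · ∑_{i,j} a i · a j · H i j, where ∂_k denotes the partial derivative in the k-th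 coordinate direction of ℝⁿ and u⁻¹ · H i j denotes the pointwise function z ↦ H(z) i j / u(z). -/
/-!
Write `v = u⁻¹`. Since `u` is affine, `∂ₖ v = -aₖ v²`, so two applications of the Leibniz rule
to `∂ᵢ∂ⱼ (Hᵢⱼ v)` give the identity for each pair `(i, j)`, with first-order part
`-v² (aᵢ ∂ⱼHᵢⱼ + aⱼ ∂ᵢHᵢⱼ)`. By the symmetry of `H` the two halves have the same sum over `i, j`.
-/

open scoped BigOperators

/-- The partial derivative of a function `g : ℝⁿ → ℝ` in the `k`-th coordinate
direction. -/
noncomputable def pd {n : ℕ} (k : Fin n) (g : (Fin n → ℝ) → ℝ) : (Fin n → ℝ) → ℝ :=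
  fun z => fderiv ℝ g z (Pi.single k 1)

namespace pd

variable {n : ℕ} {k : Fin n} {f g : (Fin n → ℝ) → ℝ} {z : Fin n → ℝ}

theorem congr_of_eqOn {U : Set (Fin n → ℝ)} (hU : IsOpen U) (hfg : Set.EqOn f g U)
    (hz : z ∈ U) : pd k f z = pd k g z := by
  rw [pd, pd, (Filter.eventuallyEq_of_mem (hU.mem_nhds hz) hfg).fderiv_eq]

theorem sub (hf : DifferentiableAt ℝ f z) (hg : DifferentiableAt ℝ g z) :
    pd k (fun w => f w - g w) z = pd k f z - pd k g z := by
  simp [pd, fderiv_fun_sub hf hg]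

theorem const_mul (c : ℝ) (hf : DifferentiableAt ℝ f z) :
    pd k (fun w => c * f w) z = c * pd k f z := by
  simp [pd, fderiv_const_mul hf]

theorem mul (hf : DifferentiableAt ℝ f z) (hg : DifferentiableAt ℝ g z) :
    pd k (fun w => f w * g w) z = pd k f z * g z + f z * pd k g z := by
  simp only [pd, fderiv_fun_mul hf hg, add_apply, smul_apply, smul_eq_mul]
  ring

theorem inv (hf : DifferentiableAt ℝ f z) (hz : f z ≠ 0) :
    pd k (fun w => (f w)⁻¹) z = -(f z)⁻¹ ^ 2 * pd k f z := by
  have hinv : HasFDerivAt (fun w => (f w)⁻¹) ((-(f z ^ 2)⁻¹) • fderiv ℝ f z) z :=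
    (hasDerivAt_inv hz).comp_hasFDerivAt z hf.hasFDerivAt
  simp [pd, hinv.fderiv]

theorem affine (a : Fin n → ℝ) (a₀ : ℝ) :
    pd k (fun w => ∑ i, a i * w i + a₀) z = a k := by
  have hcoord (i : Fin n) :
      HasFDerivAt (fun w : Fin n → ℝ => a i * w i) (a i • ContinuousLinearMap.proj i) z :=
    (ContinuousLinearMap.proj (R := ℝ) (φ := fun _ : Fin n => ℝ) i).hasFDerivAt.const_mul (a i)
  rw [pd, fderiv_add_const, fderiv_fun_sum fun i _ => by fun_prop]
  simp [fun i => (hcoord i).fderiv, Pi.single_apply]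

end pd

theorem ContDiffAt.pd {n : ℕ} {m : WithTop ℕ∞} {f : (Fin n → ℝ) → ℝ} {z : Fin n → ℝ}
    (hf : ContDiffAt ℝ (m + 1) f z) (k : Fin n) : ContDiffAt ℝ m (pd k f) z :=
  (hf.fderiv_right le_rfl).clm_apply contDiffAt_const

theorem pd_pd_div_affine {n : ℕ} {a : Fin n → ℝ} {a₀ : ℝ} {U : Set (Fin n → ℝ)} (hU : IsOpen U)
    {u : (Fin n → ℝ) → ℝ} (hu : u = fun w => ∑ k, a k * w k + a₀) (hu0 : ∀ w ∈ U, u w ≠ 0)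
    {h : (Fin n → ℝ) → ℝ} (hh : ContDiffOn ℝ 2 h U) (i j : Fin n) {z : Fin n → ℝ} (hz : z ∈ U) :
    pd i (pd j (fun w => h w / u w)) z
      = (u z)⁻¹ * pd i (pd j h) z
        - (u z)⁻¹ ^ 2 * (a i * pd j h z + a j * pd i h z)
        + 2 * (u z)⁻¹ ^ 3 * (a i * a j * h z) := by
  have hu_diff : Differentiable ℝ u := by rw [hu]; fun_prop
  have hpd_u (k : Fin n) (w : Fin n → ℝ) : pd k u w = a k := by rw [hu]; exact pd.affine a a₀
  set v := fun w => (u w)⁻¹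
  have hv_diff (w : Fin n → ℝ) (hw : w ∈ U) : DifferentiableAt ℝ v w :=
    (hu_diff w).inv (hu0 w hw)
  have hpd_v (k : Fin n) (w : Fin n → ℝ) (hw : w ∈ U) : pd k v w = -a k * v w ^ 2 := by
    rw [pd.inv (hu_diff w) (hu0 w hw), hpd_u]; ring
  have hh_C2 (w : Fin n → ℝ) (hw : w ∈ U) : ContDiffAt ℝ 2 h w := hh.contDiffAt (hU.mem_nhds hw)
  have hh_diff (w : Fin n → ℝ) (hw : w ∈ U) : DifferentiableAt ℝ h w :=
    (hh_C2 w hw).differentiableAt (by norm_num)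
  have hpd_h_diff : DifferentiableAt ℝ (pd j h) z :=
    ((hh_C2 z hz).pd j).differentiableAt one_ne_zero
  have hfirst : Set.EqOn (pd j (fun w => h w / u w))
      (fun w => pd j h w * v w - a j * (h w * (v w * v w))) U := by
    intro w hw
    simp only [div_eq_mul_inv]
    rw [pd.mul (hh_diff w hw) (hv_diff w hw), hpd_v j w hw]
    ring
  have hvz := hv_diff z hz
  have hhz := hh_diff z hz
  rw [pd.congr_of_eqOn hU hfirst hz, pd.sub (by fun_prop) (by fun_prop),
    pd.const_mul _ (by fun_prop), pd.mul hpd_h_diff hvz, pd.mul hhz (by fun_prop),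
    pd.mul hvz hvz, hpd_v i z hz]
  ring

theorem toric_divergence_form_identity_general
    (n : ℕ) (a : Fin n → ℝ) (a₀ : ℝ)
    (U : Set (Fin n → ℝ)) (hU : IsOpen U)
    (u : (Fin n → ℝ) → ℝ) (hu : u = fun z => (∑ i, a i * z i) + a₀)
    (hupos : ∀ z ∈ U, 0 < u z)
    (H : (Fin n → ℝ) → Matrix (Fin n) (Fin n) ℝ)
    (hH : ∀ i j : Fin n, ContDiffOn ℝ 2 (fun z => H z i j) U)
    (hsymm : ∀ z ∈ U, ∀ i j : Fin n, H z i j = H z j i) :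
    ∀ z ∈ U,
      ∑ i, ∑ j, pd i (pd j (fun w => H w i j / u w)) z
        = (u z)⁻¹ * ∑ i, ∑ j, pd i (pd j (fun w => H w i j)) z
          - 2 * ((u z)⁻¹) ^ 2 * ∑ i, ∑ j, a i * pd j (fun w => H w i j) z
          + 2 * ((u z)⁻¹) ^ 3 * ∑ i, ∑ j, a i * a j * H z i j := by
  intro z hz
  have hu0 (w) (hw : w ∈ U) : u w ≠ 0 := (hupos w hw).ne'
  have hswap : ∑ i, ∑ j, a j * pd i (fun w => H w i j) z
      = ∑ i, ∑ j, a i * pd j (fun w => H w i j) z := by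
    rw [Finset.sum_comm]
    refine Finset.sum_congr rfl fun i _ => Finset.sum_congr rfl fun j _ => ?_
    rw [pd.congr_of_eqOn hU (fun w hw => hsymm w hw j i) hz]
  simp only [pd_pd_div_affine hU hu hu0 (hH _ _) _ _ hz, mul_add, Finset.sum_add_distrib,
    Finset.sum_sub_distrib, ← Finset.mul_sum, hswap]
  ring

/-- The divergence-form identity for the conformal change of the Hermitian scalar curvature
on a toric almost Kähler manifold: for a positive affine function `u` and a symmetric `C²`
matrix-valued function `H` on an open set `U ⊆ ℝⁿ`,
`∑ᵢⱼ ∂ᵢ∂ⱼ(u⁻¹ Hᵢⱼ) = u⁻¹ ∑ᵢⱼ ∂ᵢ∂ⱼ Hᵢⱼ - 2u⁻² ∑ᵢⱼ aᵢ ∂ⱼ Hᵢⱼ + 2u⁻³ ∑ᵢⱼ aᵢ aⱼ Hᵢⱼ` on `U`. -/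
theorem toric_divergence_form_identity
    (n : ℕ) (hn : 0 < n) (a : Fin n → ℝ) (a₀ : ℝ)
    (U : Set (Fin n → ℝ)) (hU : IsOpen U)
    (u : (Fin n → ℝ) → ℝ) (hu : u = fun z => (∑ i, a i * z i) + a₀)
    (hupos : ∀ z ∈ U, 0 < u z)
    (H : (Fin n → ℝ) → Matrix (Fin n) (Fin n) ℝ)
    (hH : ∀ i j : Fin n, ContDiffOn ℝ 2 (fun z => H z i j) U)
    (hsymm : ∀ z ∈ U, ∀ i j : Fin n, H z i j = H z j i) :
    ∀ z ∈ U,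
      ∑ i, ∑ j, pd i (pd j (fun w => H w i j / u w)) z
        = (u z)⁻¹ * ∑ i, ∑ j, pd i (pd j (fun w => H w i j)) z
          - 2 * ((u z)⁻¹) ^ 2 * ∑ i, ∑ j, a i * pd j (fun w => H w i j) z
          + 2 * ((u z)⁻¹) ^ 3 * ∑ i, ∑ j, a i * a j * H z i j :=
  toric_divergence_form_identity_general n a a₀ U hU u hu hupos H hH hsymm
end
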